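/- arXiv:2603.29906 — 4 statements merged into one kernel-verified Lean document; each statement's English description precedes it below -/
import Mathlib

section
/- Correspondence of solutions under the Madelung transform. Let (η,v) be a classical solution of (NLS_hy) on (−T,T) × ℝ with η(t,x) < 1 for all (t,x) (with η of class C¹ in t and C³ in x, v of class C¹ in t and C² in x, with the needed continuous mixed partial derivatives). Then there exists a function Θ ∈ C¹((−T,T), ℝ) such that Ψ(t,x) := √(1−η(t,x)) · exp(−i∫₀^x v(t,y) dy + iΘ(t)) is a classical solution of (NLS) on (−T,T) × ℝ. -/
open MeasureTheory Real Filter Topology Set intervalIntegral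

noncomputable section

/-- The pair `(η, v)` solves the hydrodynamical system `(NLS_hy)` classically at `(t, x)`. -/
def SolvesNLShyAt (f : ℝ → ℝ) (η v : ℝ → ℝ → ℝ) (t x : ℝ) : Prop :=
  deriv (fun s => η s x) t = -2 * deriv (fun y => v t y * (1 - η t y)) x ∧
  deriv (fun s => v s x) t =
    - deriv (fun y =>
        f (1 - η t y) - (v t y) ^ 2
          - iteratedDeriv 2 (fun z => η t z) y / (2 * (1 - η t y))
          - (deriv (fun z => η t z) y) ^ 2 / (4 * (1 - η t y) ^ 2)) x

/-- `Ψ` solves `(NLS)`, `i∂_tΨ + ∂_x²Ψ + Ψ f(|Ψ|²) = 0`, classically at `(t, x)`. -/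
def SolvesNLSAt (f : ℝ → ℝ) (Ψ : ℝ → ℝ → ℂ) (t x : ℝ) : Prop :=
  Complex.I * deriv (fun s => Ψ s x) t + iteratedDeriv 2 (fun y => Ψ t y) x
    + Ψ t x * (f (‖Ψ t x‖ ^ 2) : ℂ) = 0

/-- The Madelung lift `Ψ(t,x) = √(1−η(t,x)) exp(−i∫₀ˣ v(t,y)dy + iΘ(t))`. -/
def madelungSol (η v : ℝ → ℝ → ℝ) (Θ : ℝ → ℝ) (t x : ℝ) : ℂ :=
  (Real.sqrt (1 - η t x) : ℂ) *
    Complex.exp (-Complex.I * ((∫ y in (0:ℝ)..x, v t y) : ℂ) + Complex.I * (Θ t : ℂ))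

/-- x-derivative of √(1-g). -/
lemma aux_sqrt_hasDerivAt {g : ℝ → ℝ} {x : ℝ} (hgd : HasDerivAt g (deriv g x) x)
    (hx : g x < 1) :
    HasDerivAt (fun y => Real.sqrt (1 - g y)) (-(deriv g x) / (2 * Real.sqrt (1 - g x))) x := by
  have h1 : HasDerivAt (fun y => 1 - g y) (-(deriv g x)) x := by
    exact hgd.const_sub 1
  have h2 := (Real.hasDerivAt_sqrt (by linarith : (1:ℝ) - g x ≠ 0)).comp x h1
  refine h2.congr_deriv ?_
  field_simp

lemma aux_contDiff_deriv {n k : ℕ} {g : ℝ → ℝ} (hg : ContDiff ℝ ((n + k : ℕ) : WithTop ℕ∞) g) :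
    ContDiff ℝ (n : WithTop ℕ∞) (deriv^[k] g) := ContDiff.iterate_deriv' n k hg

lemma aux_Ax_hasDerivAt {g : ℝ → ℝ} (hg : ContDiff ℝ 3 g) (hglt : ∀ y, g y < 1) (x : ℝ) :
    HasDerivAt (fun y => -(deriv g y) / (2 * Real.sqrt (1 - g y)))
      (Real.sqrt (1 - g x) *
        (-(iteratedDeriv 2 g x) / (2 * (1 - g x)) - (deriv g x) ^ 2 / (4 * (1 - g x) ^ 2))) x := by
  have h3 : ContDiff ℝ ((2 + 1 : ℕ) : WithTop ℕ∞) g := by exact_mod_cast hg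
  have hg1 : ContDiff ℝ (2 : WithTop ℕ∞) (deriv g) := by
    simpa using aux_contDiff_deriv (n := 2) (k := 1) h3
  have hgd : HasDerivAt g (deriv g x) x :=
    (hg.differentiable (by norm_num) x).hasDerivAt
  have hc : HasDerivAt (fun y => -(deriv g y)) (-(iteratedDeriv 2 g x)) x := by
    have := ((hg1.differentiable (by norm_num)) x).hasDerivAt
    rw [show deriv (deriv g) x = iteratedDeriv 2 g x by
      rw [iteratedDeriv_succ, iteratedDeriv_one]] at this
    exact this.neg
  have hs : 0 < Real.sqrt (1 - g x) := Real.sqrt_pos.2 (by linarith [hglt x])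
  have hd : HasDerivAt (fun y => 2 * Real.sqrt (1 - g y))
      (2 * (-(deriv g x) / (2 * Real.sqrt (1 - g x)))) x :=
    (aux_sqrt_hasDerivAt hgd (hglt x)).const_mul 2
  have hdiv := hc.div hd (by positivity)
  refine hdiv.congr_deriv ?_
  have hs2 : Real.sqrt (1 - g x) ^ 2 = 1 - g x := Real.sq_sqrt (by linarith [hglt x])
  rw [← hs2]
  field_simp
  rw [Real.sqrt_sq hs.le]
  ring

/-- The phase factor. -/
def mdE (w : ℝ → ℝ) (θ : ℝ) (x : ℝ) : ℂ :=
  Complex.exp (-Complex.I * ((∫ s in (0:ℝ)..x, w s : ℝ) : ℂ) + Complex.I * (θ : ℂ))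

lemma mdE_hasDerivAt {w : ℝ → ℝ} (hw : Continuous w) (θ x : ℝ) :
    HasDerivAt (mdE w θ) (-Complex.I * w x * mdE w θ x) x := by
  have hW : HasDerivAt (fun y => ∫ s in (0:ℝ)..y, w s) (w x) x :=
    (hw.integral_hasStrictDerivAt 0 x).hasDerivAt
  have hWc : HasDerivAt (fun y => (((∫ s in (0:ℝ)..y, w s : ℝ)) : ℂ)) ((w x : ℂ)) x :=
    hW.ofReal_comp
  have harg : HasDerivAt (fun y => -Complex.I * ((∫ s in (0:ℝ)..y, w s : ℝ) : ℂ)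
      + Complex.I * (θ : ℂ)) (-Complex.I * (w x : ℂ)) x :=
    (hWc.const_mul (-Complex.I)).add_const _
  have := harg.cexp
  unfold mdE
  convert this using 1
  ring

lemma mdPsi_hasDerivAt_x1 {g w : ℝ → ℝ} (hgd : HasDerivAt g (deriv g x) x) (hx : g x < 1)
    (hw : Continuous w) (θ : ℝ) :
    HasDerivAt (fun y => ((Real.sqrt (1 - g y) : ℝ) : ℂ) * mdE w θ y)
      ((((-(deriv g x) / (2 * Real.sqrt (1 - g x)) : ℝ) : ℂ)
        - Complex.I * w x * ((Real.sqrt (1 - g x) : ℝ) : ℂ)) * mdE w θ x) x := by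
  have hA := (aux_sqrt_hasDerivAt hgd hx).ofReal_comp
  have := hA.mul (mdE_hasDerivAt hw θ x)
  refine this.congr_deriv ?_
  ring

lemma mdPsi_hasDerivAt_x2 {g w : ℝ → ℝ} (hg : ContDiff ℝ 3 g) (hglt : ∀ y, g y < 1)
    (hw : ContDiff ℝ 2 w) (θ x : ℝ) :
    HasDerivAt (fun y => ((((-(deriv g y) / (2 * Real.sqrt (1 - g y)) : ℝ)) : ℂ)
        - Complex.I * w y * ((Real.sqrt (1 - g y) : ℝ) : ℂ)) * mdE w θ y)
      ((((Real.sqrt (1 - g x) * (-(iteratedDeriv 2 g x) / (2 * (1 - g x))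
            - (deriv g x) ^ 2 / (4 * (1 - g x) ^ 2)) : ℝ) : ℂ)
        - Complex.I * (deriv w x) * ((Real.sqrt (1 - g x) : ℝ) : ℂ)
        - 2 * Complex.I * w x * (((-(deriv g x) / (2 * Real.sqrt (1 - g x)) : ℝ)) : ℂ)
        - ((w x : ℝ) : ℂ) ^ 2 * ((Real.sqrt (1 - g x) : ℝ) : ℂ)) * mdE w θ x) x := by
  have hgd : HasDerivAt g (deriv g x) x := (hg.differentiable (by norm_num) x).hasDerivAt
  have hwd : HasDerivAt w (deriv w x) x := (hw.differentiable (by norm_num) x).hasDerivAt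
  have hAx := (aux_Ax_hasDerivAt hg hglt x).ofReal_comp
  have hA := (aux_sqrt_hasDerivAt hgd (hglt x)).ofReal_comp
  have hc : HasDerivAt (fun y => ((((-(deriv g y) / (2 * Real.sqrt (1 - g y)) : ℝ)) : ℂ)
      - Complex.I * w y * ((Real.sqrt (1 - g y) : ℝ) : ℂ)))
      (((Real.sqrt (1 - g x) * (-(iteratedDeriv 2 g x) / (2 * (1 - g x))
            - (deriv g x) ^ 2 / (4 * (1 - g x) ^ 2)) : ℝ) : ℂ)
        - Complex.I * (((deriv w x : ℝ) : ℂ) * ((Real.sqrt (1 - g x) : ℝ) : ℂ)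
            + ((w x : ℝ) : ℂ) * (((-(deriv g x) / (2 * Real.sqrt (1 - g x)) : ℝ)) : ℂ))) x := by
    refine hAx.sub ((((hwd.ofReal_comp.const_mul Complex.I)).mul hA).congr_deriv ?_)
    push_cast
    ring
  have := hc.mul (mdE_hasDerivAt (hw.continuous) θ x)
  refine this.congr_deriv ?_
  linear_combination (((w x : ℝ) : ℂ)^2 * ((Real.sqrt (1 - g x) : ℝ) : ℂ) * mdE w θ x) *
    Complex.I_sq

lemma mdW_contDiff {w : ℝ → ℝ} (hw : ContDiff ℝ 2 w) :
    ContDiff ℝ 2 (fun y => ∫ s in (0:ℝ)..y, w s) := by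
  have hWd : ∀ y, HasDerivAt (fun y => ∫ s in (0:ℝ)..y, w s) (w y) y := fun y =>
    (hw.continuous.integral_hasStrictDerivAt 0 y).hasDerivAt
  have hdiff : Differentiable ℝ (fun y => ∫ s in (0:ℝ)..y, w s) := fun y => (hWd y).differentiableAt
  have hderiv : deriv (fun y => ∫ s in (0:ℝ)..y, w s) = w := funext fun y => (hWd y).deriv
  have : ContDiff ℝ ((1 : ℕ∞) + 1) (fun y => ∫ s in (0:ℝ)..y, w s) := by
    rw [contDiff_succ_iff_deriv]
    refine ⟨hdiff, by simp, ?_⟩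
    rw [hderiv]; exact hw.of_le (by norm_num)
  exact this.of_le (by norm_num)

lemma mdE_contDiff {w : ℝ → ℝ} (hw : ContDiff ℝ 2 w) (θ : ℝ) :
    ContDiff ℝ 2 (mdE w θ) := by
  refine Complex.contDiff_exp.comp ?_
  exact (contDiff_const.mul (Complex.ofRealCLM.contDiff.comp (mdW_contDiff hw))).add contDiff_const

lemma mdPsi_contDiff {g w : ℝ → ℝ} (hg : ContDiff ℝ 3 g) (hglt : ∀ y, g y < 1)
    (hw : ContDiff ℝ 2 w) (θ : ℝ) :
    ContDiff ℝ 2 (fun y => ((Real.sqrt (1 - g y) : ℝ) : ℂ) * mdE w θ y) := by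
  have h1 : ContDiff ℝ 2 (fun y => Real.sqrt (1 - g y)) := by
    rw [contDiff_iff_contDiffAt]
    intro y
    exact (Real.contDiffAt_sqrt (by linarith [hglt y])).comp y
      ((contDiff_const.sub (hg.of_le (by norm_num))).contDiffAt)
  exact (Complex.ofRealCLM.contDiff.comp h1).mul (mdE_contDiff hw θ)

lemma mdPsi_iteratedDeriv_two {g w : ℝ → ℝ} (hg : ContDiff ℝ 3 g) (hglt : ∀ y, g y < 1)
    (hw : ContDiff ℝ 2 w) (θ x : ℝ) :
    iteratedDeriv 2 (fun y => ((Real.sqrt (1 - g y) : ℝ) : ℂ) * mdE w θ y) x =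
      ((((Real.sqrt (1 - g x) * (-(iteratedDeriv 2 g x) / (2 * (1 - g x))
            - (deriv g x) ^ 2 / (4 * (1 - g x) ^ 2)) : ℝ) : ℂ)
        - Complex.I * ((deriv w x : ℝ) : ℂ) * ((Real.sqrt (1 - g x) : ℝ) : ℂ)
        - 2 * Complex.I * w x * (((-(deriv g x) / (2 * Real.sqrt (1 - g x)) : ℝ)) : ℂ)
        - ((w x : ℝ) : ℂ) ^ 2 * ((Real.sqrt (1 - g x) : ℝ) : ℂ)) * mdE w θ x) := by
  have hd1 : deriv (fun y => ((Real.sqrt (1 - g y) : ℝ) : ℂ) * mdE w θ y) =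
      fun y => ((((-(deriv g y) / (2 * Real.sqrt (1 - g y)) : ℝ)) : ℂ)
        - Complex.I * w y * ((Real.sqrt (1 - g y) : ℝ) : ℂ)) * mdE w θ y := by
    funext y
    exact (mdPsi_hasDerivAt_x1 ((hg.differentiable (by norm_num) y).hasDerivAt) (hglt y)
      hw.continuous θ).deriv
  rw [iteratedDeriv_succ, iteratedDeriv_one, hd1]
  exact (mdPsi_hasDerivAt_x2 hg hglt hw θ x).deriv

lemma mdIntegral_hasDerivAt_t {v : ℝ → ℝ → ℝ} {T t : ℝ} (x : ℝ) (ht : t ∈ Set.Ioo (-T) T)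
    (hvc : ∀ s ∈ Set.Ioo (-T) T, Continuous (v s))
    (hvt : ∀ y : ℝ, DifferentiableOn ℝ (fun s => v s y) (Set.Ioo (-T) T))
    (hvt_cont : ContinuousOn (fun p : ℝ × ℝ => deriv (fun s => v s p.2) p.1)
      (Set.Ioo (-T) T ×ˢ Set.univ)) :
    HasDerivAt (fun s => ∫ y in (0:ℝ)..x, v s y)
      (∫ y in (0:ℝ)..x, deriv (fun s => v s y) t) t := by
  obtain ⟨ε, hε, hball⟩ := Metric.isOpen_iff.1 isOpen_Ioo t ht
  set δ := ε / 2 with hδdef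
  have hδ : 0 < δ := by positivity
  have hcb : Metric.closedBall t δ ⊆ Set.Ioo (-T) T := fun s hs =>
    hball (lt_of_le_of_lt (Metric.mem_closedBall.1 hs) (by linarith))
  have hK : IsCompact ((Metric.closedBall t δ) ×ˢ (Set.uIcc 0 x)) :=
    (isCompact_closedBall t δ).prod isCompact_uIcc
  have hφ : ContinuousOn (fun p : ℝ × ℝ => deriv (fun s => v s p.2) p.1)
      ((Metric.closedBall t δ) ×ˢ (Set.uIcc 0 x)) :=
    hvt_cont.mono (Set.prod_mono hcb (Set.subset_univ _))
  obtain ⟨M, hM⟩ := hK.exists_bound_of_continuousOn hφ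
  have hslice : Continuous (fun y => deriv (fun s => v s y) t) := by
    rw [continuous_iff_continuousAt]
    intro y
    have h1 : ContinuousAt (fun p : ℝ × ℝ => deriv (fun s => v s p.2) p.1) (t, y) :=
      hvt_cont.continuousAt ((isOpen_Ioo.prod isOpen_univ).mem_nhds (by simp [ht]))
    exact h1.comp (Continuous.continuousAt (by fun_prop))
  have key := intervalIntegral.hasDerivAt_integral_of_dominated_loc_of_deriv_le
    (F := fun s y => v s y) (F' := fun s y => deriv (fun σ => v σ y) s)
    (bound := fun _ => M) (a := 0) (b := x) (μ := volume) (x₀ := t) (Metric.ball_mem_nhds t hδ)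
    ?_ ?_ ?_ ?_ ?_ ?_
  · exact key.2
  · filter_upwards [isOpen_Ioo.mem_nhds ht] with s hs
    exact (hvc s hs).aestronglyMeasurable
  · exact (hvc t ht).intervalIntegrable 0 x
  · exact hslice.aestronglyMeasurable
  · refine Filter.Eventually.of_forall fun y hy s hs => ?_
    exact hM (s, y) ⟨Metric.ball_subset_closedBall hs, Set.uIoc_subset_uIcc hy⟩
  · exact intervalIntegrable_const
  · refine Filter.Eventually.of_forall fun y hy s hs => ?_
    have hsI : s ∈ Set.Ioo (-T) T := hcb (Metric.ball_subset_closedBall hs)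
    exact ((hvt y).differentiableAt (isOpen_Ioo.mem_nhds hsI)).hasDerivAt

def madelungSol' (η v : ℝ → ℝ → ℝ) (Θ : ℝ → ℝ) (t x : ℝ) : ℂ :=
  (Real.sqrt (1 - η t x) : ℂ) *
    Complex.exp (-Complex.I * ((∫ y in (0:ℝ)..x, v t y) : ℂ) + Complex.I * (Θ t : ℂ))

lemma madelungSol'_eq (η v : ℝ → ℝ → ℝ) (Θ : ℝ → ℝ) (t x : ℝ) :
    madelungSol' η v Θ t x = ((Real.sqrt (1 - η t x) : ℝ) : ℂ) * mdE (v t) (Θ t) x := by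
  unfold madelungSol' mdE
  rw [intervalIntegral.integral_ofReal]

lemma mdPsi_hasDerivAt_tvar {η v : ℝ → ℝ → ℝ} {Θ : ℝ → ℝ} {t x IVt Θ' : ℝ}
    (hηtd : HasDerivAt (fun s => η s x) (deriv (fun s => η s x) t) t)
    (hx : η t x < 1)
    (hI : HasDerivAt (fun s => ∫ y in (0:ℝ)..x, v s y) IVt t)
    (hΘ : HasDerivAt Θ Θ' t) :
    HasDerivAt (fun s => madelungSol' η v Θ s x)
      ((((-(deriv (fun s => η s x) t) / (2 * Real.sqrt (1 - η t x)) : ℝ) : ℂ)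
        + ((Real.sqrt (1 - η t x) : ℝ) : ℂ) *
            (-Complex.I * ((IVt : ℝ) : ℂ) + Complex.I * ((Θ' : ℝ) : ℂ)))
        * mdE (v t) (Θ t) x) t := by
  have hA : HasDerivAt (fun s => ((Real.sqrt (1 - η s x) : ℝ) : ℂ))
      ((-(deriv (fun s => η s x) t) / (2 * Real.sqrt (1 - η t x)) : ℝ)) t :=
    (aux_sqrt_hasDerivAt hηtd hx).ofReal_comp
  have harg : HasDerivAt
      (fun s => -Complex.I * ((∫ y in (0:ℝ)..x, v s y : ℝ) : ℂ) + Complex.I * ((Θ s : ℝ) : ℂ))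
      (-Complex.I * ((IVt : ℝ) : ℂ) + Complex.I * ((Θ' : ℝ) : ℂ)) t :=
    (hI.ofReal_comp.const_mul (-Complex.I)).add (hΘ.ofReal_comp.const_mul Complex.I)
  have hE := harg.cexp
  have h2 := hA.mul hE
  have hfun : (fun s => madelungSol' η v Θ s x) =
      fun s => ((Real.sqrt (1 - η s x) : ℝ) : ℂ) * mdE (v s) (Θ s) x :=
    funext fun s => madelungSol'_eq η v Θ s x
  rw [hfun]
  unfold mdE
  refine h2.congr_deriv ?_
  ring

lemma slice_cont_fst {F : ℝ × ℝ → ℝ} {U : Set ℝ} (hU : IsOpen U)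
    (hF : ContinuousOn F (U ×ˢ (Set.univ : Set ℝ))) {t : ℝ} (y : ℝ) (ht : t ∈ U) :
    ContinuousAt (fun s => F (s, y)) t :=
  (hF.continuousAt ((hU.prod isOpen_univ).mem_nhds (by simp [ht]))).comp
    (Continuous.continuousAt (by fun_prop))

lemma slice_cont_snd {F : ℝ × ℝ → ℝ} {U : Set ℝ} (hU : IsOpen U)
    (hF : ContinuousOn F (U ×ˢ (Set.univ : Set ℝ))) {t : ℝ} (ht : t ∈ U) :
    Continuous (fun z => F (t, z)) := by
  rw [continuous_iff_continuousAt]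
  intro y
  exact (hF.continuousAt ((hU.prod isOpen_univ).mem_nhds (by simp [ht]))).comp
    (Continuous.continuousAt (by fun_prop))

/-- The RHS potential of the hydrodynamical system. -/
def mdG (f : ℝ → ℝ) (η v : ℝ → ℝ → ℝ) (t : ℝ) : ℝ → ℝ := fun y =>
  f (1 - η t y) - (v t y) ^ 2 - iteratedDeriv 2 (fun z => η t z) y / (2 * (1 - η t y))
    - (deriv (fun z => η t z) y) ^ 2 / (4 * (1 - η t y) ^ 2)

/-- **Correspondence of solutions under the Madelung transform**
(Proposition 2.5 of the paper): every classical solution `(η, v)` of `(NLS_hy)` on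
`(−T,T) × ℝ` with `η < 1` lifts, for a suitable `C¹` phase `Θ`, to a classical solution
`Ψ = √(1−η) e^{−i∫₀ˣv + iΘ}` of `(NLS)` on `(−T,T) × ℝ`. -/
theorem madelung_solution_correspondence
    (f : ℝ → ℝ) (hf : ContDiffOn ℝ 1 f (Set.Ici 0)) (hf1 : f 1 = 0)
    (T : ℝ) (hT : 0 < T)
    (η v : ℝ → ℝ → ℝ)
    (hlt : ∀ t ∈ Set.Ioo (-T) T, ∀ x : ℝ, η t x < 1)
    -- regularity: `η` is C¹ in `t` and C³ in `x`, `v` is C¹ in `t` and C² in `x`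
    (hηx : ∀ t ∈ Set.Ioo (-T) T, ContDiff ℝ 3 (fun x => η t x))
    (hvx : ∀ t ∈ Set.Ioo (-T) T, ContDiff ℝ 2 (fun x => v t x))
    (hηt : ∀ x : ℝ, DifferentiableOn ℝ (fun t => η t x) (Set.Ioo (-T) T))
    (hvt : ∀ x : ℝ, DifferentiableOn ℝ (fun t => v t x) (Set.Ioo (-T) T))
    -- the needed continuous (mixed) partial derivatives
    (hηt_cont : ContinuousOn (fun p : ℝ × ℝ => deriv (fun s => η s p.2) p.1)
      (Set.Ioo (-T) T ×ˢ Set.univ))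
    (hvt_cont : ContinuousOn (fun p : ℝ × ℝ => deriv (fun s => v s p.2) p.1)
      (Set.Ioo (-T) T ×ˢ Set.univ))
    (hηx_cont : ∀ k ≤ 3, ContinuousOn (fun p : ℝ × ℝ => iteratedDeriv k (fun y => η p.1 y) p.2)
      (Set.Ioo (-T) T ×ˢ Set.univ))
    (hvx_cont : ∀ k ≤ 2, ContinuousOn (fun p : ℝ × ℝ => iteratedDeriv k (fun y => v p.1 y) p.2)
      (Set.Ioo (-T) T ×ˢ Set.univ))
    -- `(η, v)` solves `(NLS_hy)` on `(−T,T) × ℝ`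
    (hsol : ∀ t ∈ Set.Ioo (-T) T, ∀ x : ℝ, SolvesNLShyAt f η v t x) :
    ∃ Θ : ℝ → ℝ, ContDiffOn ℝ 1 Θ (Set.Ioo (-T) T) ∧
      (∀ t ∈ Set.Ioo (-T) T, ∀ x : ℝ,
        DifferentiableAt ℝ (fun s => madelungSol η v Θ s x) t) ∧
      (∀ t ∈ Set.Ioo (-T) T, ContDiff ℝ 2 (fun y => madelungSol η v Θ t y)) ∧
      (∀ t ∈ Set.Ioo (-T) T, ∀ x : ℝ, SolvesNLSAt f (madelungSol η v Θ) t x) := by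
  have hS : IsOpen (Set.Ioo (-T : ℝ) T) := isOpen_Ioo
  have h0S : (0 : ℝ) ∈ Set.Ioo (-T) T := ⟨by linarith, hT⟩
  have hpos : ∀ t ∈ Set.Ioo (-T) T, ∀ x : ℝ, 0 < 1 - η t x := fun t ht x => by
    linarith [hlt t ht x]
  -- continuity of `s ↦ G s 0`
  have hGt_cont : ContinuousOn (fun s => mdG f η v s 0) (Set.Ioo (-T) T) := by
    intro t ht
    have c0 : ContinuousAt (fun s => η s 0) t := by
      have := slice_cont_fst hS (hηx_cont 0 (by norm_num)) 0 ht
      simpa [iteratedDeriv_zero] using this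
    have c1 : ContinuousAt (fun s => deriv (fun z => η s z) 0) t := by
      have := slice_cont_fst hS (hηx_cont 1 (by norm_num)) 0 ht
      simpa [iteratedDeriv_one] using this
    have c2 : ContinuousAt (fun s => iteratedDeriv 2 (fun z => η s z) 0) t :=
      slice_cont_fst hS (hηx_cont 2 (by norm_num)) 0 ht
    have cv : ContinuousAt (fun s => v s 0) t := by
      have := slice_cont_fst hS (hvx_cont 0 (by norm_num)) 0 ht
      simpa [iteratedDeriv_zero] using this
    have cf : ContinuousAt (fun s => f (1 - η s 0)) t := by
      have := ContinuousAt.comp (x := t) (g := f) (f := fun s => 1 - η s 0)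
        (hf.continuousOn.continuousAt (Ici_mem_nhds (hpos t ht 0)))
        (continuousAt_const.sub c0)
      exact this
    have hne : (2 : ℝ) * (1 - η t 0) ≠ 0 := by have := hpos t ht 0; positivity
    have hne2 : (4 : ℝ) * (1 - η t 0) ^ 2 ≠ 0 := by have := hpos t ht 0; positivity
    refine ContinuousAt.continuousWithinAt ?_
    simp only [mdG]
    exact ((cf.sub (cv.pow 2)).sub
        (c2.div (continuousAt_const.mul (continuousAt_const.sub c0)) hne)).sub
      ((c1.pow 2).div (continuousAt_const.mul ((continuousAt_const.sub c0).pow 2)) hne2)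
  -- the phase
  set Θ : ℝ → ℝ := fun τ => ∫ s in (0:ℝ)..τ, mdG f η v s 0 with hΘdef
  have hΘd : ∀ t ∈ Set.Ioo (-T) T, HasDerivAt Θ (mdG f η v t 0) t := by
    intro t ht
    have hsub : Set.uIcc 0 t ⊆ Set.Ioo (-T) T := Set.OrdConnected.uIcc_subset
      Set.ordConnected_Ioo h0S ht
    exact intervalIntegral.integral_hasDerivAt_right
      ((hGt_cont.mono hsub).intervalIntegrable)
      (hGt_cont.stronglyMeasurableAtFilter hS t ht)
      (hGt_cont.continuousAt (hS.mem_nhds ht))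
  have hΘC1 : ContDiffOn ℝ 1 Θ (Set.Ioo (-T) T) := by
    rw [show (1 : WithTop ℕ∞) = 0 + 1 from rfl, contDiffOn_succ_iff_deriv_of_isOpen hS]
    refine ⟨fun t ht => ((hΘd t ht).differentiableAt).differentiableWithinAt, by simp, ?_⟩
    rw [contDiffOn_zero]
    exact hGt_cont.congr fun t ht => (hΘd t ht).deriv
  -- continuity of `y ↦ ∂ₜv(t,y)`
  have hslice_cont : ∀ t ∈ Set.Ioo (-T) T, Continuous (fun y => deriv (fun s => v s y) t) :=
    fun t ht => slice_cont_snd hS hvt_cont ht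
  -- differentiability of `G t ·`
  have hGdiff : ∀ t ∈ Set.Ioo (-T) T, ∀ x : ℝ, DifferentiableAt ℝ (mdG f η v t) x := by
    intro t ht x
    have h3 : ContDiff ℝ ((2 + 1 : ℕ) : WithTop ℕ∞) (fun z => η t z) := by
      exact_mod_cast hηx t ht
    have h3' : ContDiff ℝ ((1 + 2 : ℕ) : WithTop ℕ∞) (fun z => η t z) := by
      exact_mod_cast hηx t ht
    have hd1 : Differentiable ℝ (deriv (fun z => η t z)) := by
      have := aux_contDiff_deriv (n := 2) (k := 1) h3
      simpa using this.differentiable (by norm_num)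
    have hd2 : Differentiable ℝ (iteratedDeriv 2 (fun z => η t z)) := by
      rw [iteratedDeriv_eq_iterate]
      exact (aux_contDiff_deriv (n := 1) (k := 2) h3').differentiable (by norm_num)
    have hηd : Differentiable ℝ (fun z => η t z) :=
      (hηx t ht).differentiable (by norm_num)
    have hvd : Differentiable ℝ (fun y => v t y) :=
      (hvx t ht).differentiable (by norm_num)
    have e1 : DifferentiableAt ℝ (fun y => f (1 - η t y)) x := by
      have := DifferentiableAt.comp (g := f) (f := fun y => 1 - η t y) x
        ((hf.differentiableOn one_ne_zero).differentiableAt (Ici_mem_nhds (hpos t ht x)))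
        ((differentiable_const 1).sub hηd).differentiableAt
      exact this
    have hne : (2 : ℝ) * (1 - η t x) ≠ 0 := by have := hpos t ht x; positivity
    have hne2 : (4 : ℝ) * (1 - η t x) ^ 2 ≠ 0 := by have := hpos t ht x; positivity
    unfold mdG
    exact ((e1.sub ((hvd x).pow 2)).sub
        ((hd2 x).div ((differentiableAt_const _).mul
          ((differentiableAt_const _).sub (hηd x))) hne)).sub
      (((hd1 x).pow 2).div ((differentiableAt_const _).mul
        (((differentiableAt_const _).sub (hηd x)).pow 2)) hne2)
  -- the key constancy identity
  have hconst : ∀ t ∈ Set.Ioo (-T) T, ∀ x : ℝ,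
      (∫ y in (0:ℝ)..x, deriv (fun s => v s y) t) = mdG f η v t 0 - mdG f η v t x := by
    intro t ht x
    have hder : ∀ u : ℝ, HasDerivAt
        (fun r => (∫ y in (0:ℝ)..r, deriv (fun s => v s y) t) + mdG f η v t r) 0 u := by
      intro u
      have hW : HasDerivAt (fun r => ∫ y in (0:ℝ)..r, deriv (fun s => v s y) t)
          (deriv (fun s => v s u) t) u :=
        ((hslice_cont t ht).integral_hasStrictDerivAt 0 u).hasDerivAt
      have h2 : HasDerivAt (mdG f η v t) (deriv (mdG f η v t) u) u :=
        (hGdiff t ht u).hasDerivAt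
      have h12 := hW.add h2
      have hs2 : deriv (fun s => v s u) t = - deriv (mdG f η v t) u := (hsol t ht u).2
      rw [hs2] at h12
      refine h12.congr_deriv ?_
      ring
    have hc := is_const_of_deriv_eq_zero (𝕜 := ℝ)
      (fun u => (hder u).differentiableAt) (fun u => (hder u).deriv) x 0
    simp only [intervalIntegral.integral_same, zero_add] at hc
    linarith [hc]
  have hMeq : madelungSol = madelungSol' := rfl
  have hvc : ∀ s ∈ Set.Ioo (-T) T, Continuous (v s) := fun s hs => (hvx s hs).continuous
  have hηtd : ∀ t ∈ Set.Ioo (-T) T, ∀ x : ℝ,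
      HasDerivAt (fun s => η s x) (deriv (fun s => η s x) t) t := fun t ht x =>
    ((hηt x).differentiableAt (hS.mem_nhds ht)).hasDerivAt
  refine ⟨Θ, hΘC1, ?_, ?_, ?_⟩
  · intro t ht x
    rw [hMeq]
    exact (mdPsi_hasDerivAt_tvar (hηtd t ht x) (hlt t ht x)
      (mdIntegral_hasDerivAt_t x ht hvc hvt hvt_cont) (hΘd t ht)).differentiableAt
  · intro t ht
    have hfun : (fun y => madelungSol η v Θ t y) =
        fun y => ((Real.sqrt (1 - η t y) : ℝ) : ℂ) * mdE (v t) (Θ t) y :=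
      funext fun y => by rw [hMeq]; exact madelungSol'_eq η v Θ t y
    rw [hfun]
    exact mdPsi_contDiff (hηx t ht) (hlt t ht) (hvx t ht) (Θ t)
  · intro t ht x
    unfold SolvesNLSAt
    have hD := (mdPsi_hasDerivAt_tvar (hηtd t ht x) (hlt t ht x)
      (mdIntegral_hasDerivAt_t x ht hvc hvt hvt_cont) (hΘd t ht)).deriv
    have hfun : (fun y => madelungSol' η v Θ t y) =
        fun y => ((Real.sqrt (1 - η t y) : ℝ) : ℂ) * mdE (v t) (Θ t) y :=
      funext fun y => madelungSol'_eq η v Θ t y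
    rw [hMeq, hD, hfun,
      mdPsi_iteratedDeriv_two (hηx t ht) (hlt t ht) (hvx t ht) (Θ t) x,
      madelungSol'_eq η v Θ t x]
    have hA2 : Real.sqrt (1 - η t x) ^ 2 = 1 - η t x := Real.sq_sqrt (le_of_lt (hpos t ht x))
    have hApos : 0 < Real.sqrt (1 - η t x) := Real.sqrt_pos.2 (hpos t ht x)
    have habs : (‖((Real.sqrt (1 - η t x) : ℝ) : ℂ) * mdE (v t) (Θ t) x‖) ^ 2
        = 1 - η t x := by
      unfold mdE
      rw [norm_mul, Complex.norm_real, Complex.norm_exp]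
      simp [abs_of_nonneg (Real.sqrt_nonneg _), hA2]
    rw [habs]
    have hph : -Complex.I * ((∫ y in (0:ℝ)..x, deriv (fun s => v s y) t : ℝ) : ℂ)
        + Complex.I * ((mdG f η v t 0 : ℝ) : ℂ) = Complex.I * ((mdG f η v t x : ℝ) : ℂ) := by
      rw [hconst t ht x]; push_cast; ring
    rw [hph]
    -- imaginary-part identity
    have hprod : deriv (fun y => v t y * (1 - η t y)) x = deriv (fun y => v t y) x
        * (1 - η t x) + v t x * (-(deriv (fun z => η t z) x)) := by
      have h1 : HasDerivAt (fun y => v t y) (deriv (fun y => v t y) x) x :=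
        ((hvx t ht).differentiable (by norm_num) x).hasDerivAt
      have h2 : HasDerivAt (fun y => 1 - η t y) (-(deriv (fun z => η t z) x)) x := by
        exact (((hηx t ht).differentiable (by norm_num) x).hasDerivAt).const_sub 1
      exact (h1.mul h2).deriv
    have him : deriv (fun s => η s x) t = -2 * (deriv (fun y => v t y) x * (1 - η t x)
        - v t x * deriv (fun z => η t z) x) := by
      rw [(hsol t ht x).1, hprod]; ring
    have hIM0 : -(deriv (fun s => η s x) t) / (2 * Real.sqrt (1 - η t x))
        - deriv (fun y => v t y) x * Real.sqrt (1 - η t x)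
        + v t x * deriv (fun z => η t z) x / Real.sqrt (1 - η t x) = 0 := by
      rw [him]
      field_simp
      linear_combination (-deriv (fun y => v t y) x) * hA2
    have hIM0C : -((deriv (fun s => η s x) t : ℝ) : ℂ) / (2 * ((Real.sqrt (1 - η t x) : ℝ) : ℂ))
        - ((deriv (fun y => v t y) x : ℝ) : ℂ) * ((Real.sqrt (1 - η t x) : ℝ) : ℂ)
        + ((v t x : ℝ) : ℂ) * ((deriv (fun z => η t z) x : ℝ) : ℂ)
          / ((Real.sqrt (1 - η t x) : ℝ) : ℂ) = 0 := by
      exact_mod_cast congrArg (fun r : ℝ => (r : ℂ)) hIM0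
    simp only [mdG]
    push_cast
    linear_combination (Complex.I * mdE (v t) (Θ t) x) * hIM0C
      + (((Real.sqrt (1 - η t x) : ℝ) : ℂ) * (((f (1 - η t x) : ℝ) : ℂ) - ((v t x : ℝ) : ℂ) ^ 2
          - ((iteratedDeriv 2 (fun z => η t z) x : ℝ) : ℂ) / (2 * (1 - ((η t x : ℝ) : ℂ)))
          - ((deriv (fun z => η t z) x : ℝ) : ℂ) ^ 2 / (4 * (1 - ((η t x : ℝ) : ℂ)) ^ 2))
        * mdE (v t) (Θ t) x) * Complex.I_sq

end
end

section
/- Uniform L∞ bound for a well-separated chain of decaying profiles. Let N ≥ 1, K, α > 0 and ι ∈ (0,1), and let η₁, …, η_N : ℝ → ℝ be functions such that for every k and every x ∈ ℝ: |η_k(x)| ≤ K e^{−α|x|} and η_k(x) ≤ 1 − ι. Then there exists L > 0 (depending only on N, K, α, ι) such that for all positions a₁ < a₂ < … < a_N with a_{k+1} − a_k > L for each k, one has sup_{x∈ℝ} Σ_{k=1}^N η_k(x − a_k) ≤ 1 − ι/2. -/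
open Real Finset

/-- **Uniform `L^∞` bound for a well-separated chain of decaying profiles.**
If `η₁, …, η_N` satisfy `|η_k(x)| ≤ K e^{−α|x|}` and `η_k ≤ 1 − ι`, then for sufficiently
separated positions `a₁ < ⋯ < a_N` (gaps `> L`), the chain `Σ_k η_k(· − a_k)` is bounded by
`1 − ι/2`. -/
theorem chain_sup_bound
    (N : ℕ) (hN : 1 ≤ N) (K α ι : ℝ) (hK : 0 < K) (hα : 0 < α) (hι : ι ∈ Set.Ioo (0:ℝ) 1)
    (η : ℕ → ℝ → ℝ)
    (hdecay : ∀ k < N, ∀ x : ℝ, |η k x| ≤ K * Real.exp (-α * |x|))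
    (hbound : ∀ k < N, ∀ x : ℝ, η k x ≤ 1 - ι) :
    ∃ L > 0, ∀ a : ℕ → ℝ,
      (∀ k, k + 1 < N → a k < a (k + 1) ∧ L < a (k + 1) - a k) →
      ∀ x : ℝ, (∑ k ∈ Finset.range N, η k (x - a k)) ≤ 1 - ι / 2 := by
  obtain ⟨hι0, hι1⟩ := hι
  have hN0 : (0:ℝ) < N := by exact_mod_cast hN
  set L : ℝ := max 1 ((2/α) * Real.log (2*N*K/ι)) with hLdef
  have hL1 : (1:ℝ) ≤ L := le_max_left _ _
  have hL0 : (0:ℝ) < L := lt_of_lt_of_le one_pos hL1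
  refine ⟨L, hL0, ?_⟩
  intro a ha x
  have hkey : K * Real.exp (-α * (L/2)) ≤ ι / (2*N) := by
    have h2NK : (0:ℝ) < 2*N*K/ι := by positivity
    have hαL : Real.log (2*N*K/ι) ≤ α * (L/2) := by
      have h := le_max_right 1 ((2/α) * Real.log (2*N*K/ι))
      rw [← hLdef] at h
      have h2 := mul_le_mul_of_nonneg_left h (show (0:ℝ) ≤ α/2 by positivity)
      have heq : α/2 * (2/α * Real.log (2*N*K/ι)) = Real.log (2*N*K/ι) := by
        field_simp
      linarith
    have h1 : Real.exp (-α*(L/2)) ≤ (2*N*K/ι)⁻¹ := by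
      rw [← Real.exp_log (show (0:ℝ) < (2*N*K/ι)⁻¹ by positivity), Real.log_inv,
        Real.exp_le_exp]
      linarith
    have heq : K * (2*N*K/ι)⁻¹ = ι/(2*N) := by
      field_simp
    calc K * Real.exp (-α*(L/2)) ≤ K * (2*N*K/ι)⁻¹ :=
          mul_le_mul_of_nonneg_left h1 hK.le
      _ = ι/(2*N) := heq
  have hgap : ∀ j k : ℕ, j < k → k < N → L < a k - a j := by
    intro j k
    induction k with
    | zero => omega
    | succ k ih =>
      intro hjk hkN
      obtain ⟨h1, h2⟩ := ha k hkN
      rcases Nat.lt_succ_iff_lt_or_eq.mp hjk with h | h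
      · have := ih h (by omega)
        linarith
      · subst h; linarith
  have hsmall : ∀ k, k < N → L/2 ≤ |x - a k| → η k (x - a k) ≤ ι/(2*N) := by
    intro k hk hdist
    have h1 := hdecay k hk (x - a k)
    have h2 : Real.exp (-α * |x - a k|) ≤ Real.exp (-α * (L/2)) := by
      rw [Real.exp_le_exp]; nlinarith
    calc η k (x - a k) ≤ |η k (x - a k)| := le_abs_self _
      _ ≤ K * Real.exp (-α * |x - a k|) := h1
      _ ≤ K * Real.exp (-α * (L/2)) := mul_le_mul_of_nonneg_left h2 hK.le
      _ ≤ ι/(2*N) := hkey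
  have hhalf : (0:ℝ) ≤ ι/(2*N) := by positivity
  by_cases hcase : ∃ k0, k0 < N ∧ |x - a k0| ≤ L/2
  · obtain ⟨k0, hk0N, hk0⟩ := hcase
    have hmem : k0 ∈ Finset.range N := Finset.mem_range.mpr hk0N
    rw [← Finset.add_sum_erase _ _ hmem]
    have hrest : ∑ k ∈ (Finset.range N).erase k0, η k (x - a k) ≤ ι/2 := by
      have hterm : ∀ k ∈ (Finset.range N).erase k0, η k (x - a k) ≤ ι/(2*N) := by
        intro k hkmem
        obtain ⟨hne, hkr⟩ := Finset.mem_erase.mp hkmem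
        have hk' := Finset.mem_range.mp hkr
        have hLdist : L < |a k - a k0| := by
          rcases lt_or_gt_of_ne hne with h | h
          · have := hgap k k0 h hk0N
            rw [abs_sub_comm, abs_of_pos (by linarith)]; linarith
          · have := hgap k0 k h hk'
            rw [abs_of_pos (by linarith)]; linarith
        apply hsmall k hk'
        have htri : |a k - a k0| ≤ |x - a k0| + |x - a k| := by
          have heq : a k - a k0 = (x - a k0) - (x - a k) := by ring
          rw [heq]
          exact abs_sub _ _
        linarith
      calc ∑ k ∈ (Finset.range N).erase k0, η k (x - a k)
          ≤ ∑ _k ∈ (Finset.range N).erase k0, ι/(2*N) := Finset.sum_le_sum hterm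
        _ = ((Finset.range N).erase k0).card * (ι/(2*N)) := by
            rw [Finset.sum_const, nsmul_eq_mul]
        _ ≤ N * (ι/(2*N)) := by
            apply mul_le_mul_of_nonneg_right _ hhalf
            have : ((Finset.range N).erase k0).card ≤ N := by
              calc ((Finset.range N).erase k0).card ≤ (Finset.range N).card :=
                    Finset.card_le_card (Finset.erase_subset _ _)
                _ = N := Finset.card_range N
            exact_mod_cast this
        _ = ι/2 := by field_simp
    have h1 := hbound k0 hk0N (x - a k0)
    linarith
  · push_neg at hcase
    have hterm : ∀ k ∈ Finset.range N, η k (x - a k) ≤ ι/(2*N) := by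
      intro k hkr
      have hk' := Finset.mem_range.mp hkr
      exact hsmall k hk' (hcase k hk').le
    have : ∑ k ∈ Finset.range N, η k (x - a k) ≤ N * (ι/(2*N)) := by
      calc ∑ k ∈ Finset.range N, η k (x - a k)
          ≤ ∑ _k ∈ Finset.range N, ι/(2*N) := Finset.sum_le_sum hterm
        _ = N * (ι/(2*N)) := by rw [Finset.sum_const, nsmul_eq_mul, Finset.card_range]
    have heq : (N:ℝ) * (ι/(2*N)) = ι/2 := by field_simp
    linarith
end

section
/- Coercivity of the quadratic form in the monotonicity argument. Let μ, c be real numbers with 0 < μ < c, and set 𝔡 := c²/(2(μ²+c²)). Then for all real numbers δ₁, η, v with δ₁ ≥ (μ²+c²)/4 + c²/8 and |η| ≤ 𝔡/2, one has δ₁ η² − μ |η| |v| + (1−2η) v² ≥ min(c²/8, 𝔡) (η² + v²). -/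
/-- **Coercivity of the quadratic form in the monotonicity argument.**
For `0 < μ < c` and `𝔡 = c²/(2(μ²+c²))`, whenever `δ₁ ≥ (μ²+c²)/4 + c²/8` and `|η| ≤ 𝔡/2`,
the quadratic form `δ₁ η² − μ|η||v| + (1−2η)v²` dominates `min(c²/8, 𝔡)(η² + v²)`. -/
theorem coercivity_quadratic_form_monotonicity
    (μ c : ℝ) (hμ : 0 < μ) (hμc : μ < c)
    (δ₁ η v : ℝ)
    (hδ₁ : (μ ^ 2 + c ^ 2) / 4 + c ^ 2 / 8 ≤ δ₁)
    (hη : |η| ≤ (c ^ 2 / (2 * (μ ^ 2 + c ^ 2))) / 2) :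
    min (c ^ 2 / 8) (c ^ 2 / (2 * (μ ^ 2 + c ^ 2))) * (η ^ 2 + v ^ 2) ≤
      δ₁ * η ^ 2 - μ * |η| * |v| + (1 - 2 * η) * v ^ 2 := by
  set d := c ^ 2 / (2 * (μ ^ 2 + c ^ 2)) with hd
  have hs : 0 < μ ^ 2 + c ^ 2 := by positivity
  have ha : 0 ≤ |η| := abs_nonneg η
  have hb : 0 ≤ |v| := abs_nonneg v
  have ha2 : |η| ^ 2 = η ^ 2 := sq_abs η
  have hb2 : |v| ^ 2 = v ^ 2 := sq_abs v
  have hηa : η ≤ |η| := le_abs_self η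
  have hηd : 2 * (μ ^ 2 + c ^ 2) * |η| ≤ c ^ 2 / 2 := by
    rw [hd] at hη
    calc 2 * (μ ^ 2 + c ^ 2) * |η| ≤ 2 * (μ ^ 2 + c ^ 2) * (c ^ 2 / (2 * (μ ^ 2 + c ^ 2)) / 2) := by
          apply mul_le_mul_of_nonneg_left hη (by positivity)
      _ = c ^ 2 / 2 := by field_simp
  have hdd : d * (2 * (μ ^ 2 + c ^ 2)) = c ^ 2 := by rw [hd]; field_simp
  have h2d : 1 - 2 * d = μ ^ 2 / (μ ^ 2 + c ^ 2) := by
    rw [hd]; field_simp; ring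
  have hsq : 0 ≤ (μ ^ 2 + c ^ 2) / 4 * η ^ 2 - μ * |η| * |v| + μ ^ 2 / (μ ^ 2 + c ^ 2) * v ^ 2 := by
    have hpos : 0 ≤ ((μ ^ 2 + c ^ 2) * |η| - 2 * μ * |v|) ^ 2 / (4 * (μ ^ 2 + c ^ 2)) := by
      positivity
    have eq : ((μ ^ 2 + c ^ 2) * |η| - 2 * μ * |v|) ^ 2 / (4 * (μ ^ 2 + c ^ 2)) =
        (μ ^ 2 + c ^ 2) / 4 * |η| ^ 2 - μ * |η| * |v| + μ ^ 2 / (μ ^ 2 + c ^ 2) * |v| ^ 2 := by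
      field_simp
      ring
    rw [eq, ha2, hb2] at hpos
    exact hpos
  have h2a : 2 * η ≤ d := by
    have : 2 * |η| ≤ d := by linarith [hη]
    linarith [hηa]
  have hlow : μ ^ 2 / (μ ^ 2 + c ^ 2) * v ^ 2 ≤ (1 - 2 * η - d) * v ^ 2 := by
    apply mul_le_mul_of_nonneg_right _ (sq_nonneg v)
    linarith [h2d, h2a]
  have hδη : ((μ ^ 2 + c ^ 2) / 4 + c ^ 2 / 8) * η ^ 2 ≤ δ₁ * η ^ 2 :=
    mul_le_mul_of_nonneg_right hδ₁ (sq_nonneg η)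
  have key : c ^ 2 / 8 * η ^ 2 + d * v ^ 2 ≤
      δ₁ * η ^ 2 - μ * |η| * |v| + (1 - 2 * η) * v ^ 2 := by
    nlinarith [hsq, hlow, hδη]
  have h1 : min (c ^ 2 / 8) d ≤ c ^ 2 / 8 := min_le_left _ _
  have h2 : min (c ^ 2 / 8) d ≤ d := min_le_right _ _
  nlinarith [sq_nonneg η, sq_nonneg v]
end

section
/- Bootstrap (continuity) lemma. Let s₀ ≤ s₁ be real numbers, let g : [s₀, s₁] → ℝ be continuous and nonnegative, and let α, K, τ > 0 satisfy K e^{−τ s₀} ≤ α/2 and g(s₁) ≤ α. Assume that for every t ∈ [s₀, s₁], if g(s) ≤ α for all s ∈ [t, s₁], then g(s) ≤ K e^{−τ s} for all s ∈ [t, s₁]. Then g(t) ≤ K e^{−τ t} for every t ∈ [s₀, s₁]. -/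
open Set Real

/-- **Bootstrap (continuity) lemma.**  If `g` is a continuous nonnegative function on
`[s₀, s₁]` with `K e^{-τ s₀} ≤ α/2` and `g s₁ ≤ α`, and if on every subinterval `[t, s₁]`
the a priori bound `g ≤ α` can be improved to the exponential bound `g s ≤ K e^{-τ s}`,
then the exponential bound holds on all of `[s₀, s₁]`. -/
theorem bootstrap_continuity_lemma
    (s₀ s₁ : ℝ) (hs : s₀ ≤ s₁)
    (g : ℝ → ℝ) (hg_cont : ContinuousOn g (Icc s₀ s₁))
    (hg_nonneg : ∀ t ∈ Icc s₀ s₁, 0 ≤ g t)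
    (α K τ : ℝ) (hα : 0 < α) (hK : 0 < K) (hτ : 0 < τ)
    (hsmall : K * Real.exp (-τ * s₀) ≤ α / 2)
    (hend : g s₁ ≤ α)
    (himprove : ∀ t ∈ Icc s₀ s₁,
      (∀ s ∈ Icc t s₁, g s ≤ α) → (∀ s ∈ Icc t s₁, g s ≤ K * Real.exp (-τ * s))) :
    ∀ t ∈ Icc s₀ s₁, g t ≤ K * Real.exp (-τ * t) := by
  -- exponential bound at s implies ≤ α/2 for s ≥ s₀
  have hexp : ∀ s : ℝ, s₀ ≤ s → K * Real.exp (-τ * s) ≤ α / 2 := by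
    intro s hs'
    refine le_trans ?_ hsmall
    have : Real.exp (-τ * s) ≤ Real.exp (-τ * s₀) := by
      apply Real.exp_le_exp.mpr
      nlinarith
    nlinarith [Real.exp_pos (-τ * s)]
  set A : Set ℝ := {t | t ∈ Icc s₀ s₁ ∧ ∀ s ∈ Icc t s₁, g s ≤ α} with hA
  have hs₁A : s₁ ∈ A := by
    refine ⟨⟨hs, le_refl _⟩, ?_⟩
    intro s hsmem
    have : s = s₁ := le_antisymm hsmem.2 hsmem.1
    rwa [this]
  have hAne : A.Nonempty := ⟨s₁, hs₁A⟩
  have hAbdd : BddBelow A := ⟨s₀, fun t ht => ht.1.1⟩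
  set T := sInf A with hT
  have hTmem : T ∈ Icc s₀ s₁ := ⟨le_csInf hAne (fun t ht => ht.1.1), csInf_le hAbdd hs₁A⟩
  -- g ≤ α on (T, s₁]
  have hgt : ∀ s ∈ Ioc T s₁, g s ≤ α := by
    intro s hsmem
    obtain ⟨t, htA, hts⟩ := exists_lt_of_csInf_lt hAne hsmem.1
    exact htA.2 s ⟨hts.le, hsmem.2⟩
  -- g T ≤ α
  have hgT : g T ≤ α := by
    rcases eq_or_lt_of_le hTmem.2 with heq | hlt
    · rwa [heq]
    · have hcw : ContinuousWithinAt g (Ioc T s₁) T :=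
        (hg_cont T hTmem).mono (fun x hx => ⟨hTmem.1.trans hx.1.le, hx.2⟩)
      have hne : (nhdsWithin T (Ioc T s₁)).NeBot := left_nhdsWithin_Ioc_neBot hlt
      refine le_of_tendsto hcw ?_
      filter_upwards [self_mem_nhdsWithin] with s hsmem using hgt s hsmem
  have hTA : T ∈ A := ⟨hTmem, fun s hsmem => by
    rcases eq_or_lt_of_le hsmem.1 with heq | hlt
    · rwa [← heq]
    · exact hgt s ⟨hlt, hsmem.2⟩⟩
  -- T = s₀
  have hTeq : T = s₀ := by
    by_contra hne
    have hlt : s₀ < T := lt_of_le_of_ne hTmem.1 (Ne.symm hne)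
    have himp := himprove T hTmem hTA.2
    have hhalf : ∀ s ∈ Icc T s₁, g s ≤ α / 2 := fun s hsmem =>
      (himp s hsmem).trans (hexp s (hTmem.1.trans hsmem.1))
    have hgTlt : g T < α := lt_of_le_of_lt (hhalf T ⟨le_refl _, hTmem.2⟩) (by linarith)
    -- continuity at T within Icc s₀ s₁
    have hcw : ContinuousWithinAt g (Icc s₀ s₁) T := hg_cont T hTmem
    have hev : ∀ᶠ s in nhdsWithin T (Icc s₀ s₁), g s < α :=
      hcw.eventually_lt_const hgTlt
    obtain ⟨ε, hε, hball⟩ := Metric.mem_nhdsWithin_iff.mp hev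
    set t := max s₀ (T - ε / 2) with ht'
    have htlt : t < T := by
      apply max_lt hlt; linarith
    have htmem : t ∈ Icc s₀ s₁ := ⟨le_max_left _ _, (htlt.le.trans hTmem.2)⟩
    have htA : t ∈ A := by
      refine ⟨htmem, fun s hsmem => ?_⟩
      rcases le_or_gt T s with hTs | hsT
      · linarith [hhalf s ⟨hTs, hsmem.2⟩]
      · have hsIcc : s ∈ Icc s₀ s₁ := ⟨(le_max_left _ _).trans hsmem.1, hsmem.2⟩
        have hdist : s ∈ Metric.ball T ε := by
          rw [Metric.mem_ball, Real.dist_eq, abs_lt]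
          have h1 : T - ε / 2 ≤ t := le_max_right _ _
          have h2 := hsmem.1
          constructor <;> linarith
        exact (hball ⟨hdist, hsIcc⟩).le
    exact absurd (csInf_le hAbdd htA) (not_le.mpr htlt)
  -- conclude
  have := himprove s₀ ⟨le_refl _, hs⟩ (by rw [← hTeq]; exact hTA.2)
  exact this
end
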